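/- In the setting of the backward decomposition (filters φ_u defined by the normalized recursion from χ, q, g_u, and joint smoothing functional φ_{0:t|t} defined by the normalized iterated integral), fix 0 ≤ s ≤ t and let h : X → ℝ be bounded measurable. Define T_{s|s} := h and T_{s|u+1}(y) := ∫ T_{s|u}(x) B_{φ_u}(y, dx) for s ≤ u ≤ t−1. Then the marginal smoothing expectation equals the filter expectation of T_{s|t}: φ_{0:t|t}(f) = φ_t(T_{s|t}), where f(x_0, …, x_t) := h(x_s). -/

import Mathlib

open MeasureTheory

noncomputable section

variable {X : Type*} [MeasurableSpace X]

/-- The base measure `χ(dx_0) ν(dx_1) ⋯ ν(dx_t)` on paths `(x_0, …, x_t)`. -/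
def baseMeas (t : ℕ) (χ ν : Measure X) : Measure (Fin (t + 1) → X) :=
  Measure.pi (fun i => if i = 0 then χ else ν)

/-- The unnormalised joint smoothing density
`g_0(x_0) Π_{u=1}^{t} [q(x_{u−1}, x_u) g_u(x_u)]`. -/
def jointDens (t : ℕ) (q : X → X → ℝ) (g : ℕ → X → ℝ) : (Fin (t + 1) → X) → ℝ :=
  fun x => g 0 (x 0) * ∏ i : Fin t, (q (x i.castSucc) (x i.succ) * g (i.1 + 1) (x i.succ))

/-- The filter functionals: `φ_0(f) = ∫ f g_0 dχ / ∫ g_0 dχ` and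
`φ_{u+1}(f) = [∬ f(x') g_{u+1}(x') q(x,x') ν(dx') φ_u(dx)]
            / [∬ g_{u+1}(x') q(x,x') ν(dx') φ_u(dx)]`. -/
def filt0 (χ ν : Measure X) (q : X → X → ℝ) (g : ℕ → X → ℝ) : ℕ → (X → ℝ) → ℝ
  | 0 => fun f => (∫ x, f x * g 0 x ∂χ) / ∫ x, g 0 x ∂χ
  | u + 1 => fun f =>
      filt0 χ ν q g u (fun x => ∫ x', f x' * (g (u + 1) x' * q x x') ∂ν) /
        filt0 χ ν q g u (fun x => ∫ x', g (u + 1) x' * q x x' ∂ν)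

/-- The backward statistics `T_{s|s+k}`, defined by `T_{s|s} = h` and
`T_{s|u+1}(y) = ∫ T_{s|u}(x) B_{φ_u}(y, dx) = φ_u(T_{s|u} q(·,y)) / φ_u(q(·,y))`,
the filters being given as functionals `Phi`. -/
def TstF (q : X → X → ℝ) (Phi : ℕ → (X → ℝ) → ℝ) (s : ℕ) (h : X → ℝ) : ℕ → X → ℝ
  | 0 => h
  | k + 1 => fun y =>
      Phi (s + k) (fun x => TstF q Phi s h k x * q x y) / Phi (s + k) (fun x => q x y)

/-! ### Auxiliary machinery for statement 15 -/

/-- Bundle of standing hypotheses for statement 15. -/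
structure Hyp15 (χ ν : Measure X) (q : X → X → ℝ) (g : ℕ → X → ℝ)
    (εlo εhi δlo δhi : ℝ) : Prop where
  hν : ν ≠ 0
  hq : Measurable (Function.uncurry q)
  hεlo : 0 < εlo
  hεhi : εlo ≤ εhi
  hqb : ∀ x x', q x x' ∈ Set.Icc εlo εhi
  hg : ∀ u, Measurable (g u)
  hδlo : 0 < δlo
  hδhi : δlo ≤ δhi
  hgb : ∀ u x, g u x ∈ Set.Icc δlo δhi

/-- The single-time base measure: `χ` at time 0, `ν` afterwards. -/
def bm15 (χ ν : Measure X) (u : ℕ) : Measure X := if u = 0 then χ else ν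

instance bm15.instFinite (χ ν : Measure X) [IsProbabilityMeasure χ] [IsFiniteMeasure ν]
    (u : ℕ) : IsFiniteMeasure (bm15 χ ν u) := by
  unfold bm15; split <;> infer_instance

lemma bm15_succ (χ ν : Measure X) (u : ℕ) : bm15 χ ν (u + 1) = ν :=
  if_neg (Nat.succ_ne_zero u)

lemma bm15_zero (χ ν : Measure X) : bm15 χ ν 0 = χ := if_pos rfl

/-- The unnormalised filter density. -/
def wden15 (χ ν : Measure X) (q : X → X → ℝ) (g : ℕ → X → ℝ) : ℕ → X → ℝ
  | 0 => g 0
  | u + 1 => fun y => g (u + 1) y * ∫ x, q x y * wden15 χ ν q g u x ∂(bm15 χ ν u)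

/-- The unnormalised filter functional. -/
def Gam15 (χ ν : Measure X) (q : X → X → ℝ) (g : ℕ → X → ℝ) (u : ℕ) (f : X → ℝ) : ℝ :=
  ∫ x, f x * wden15 χ ν q g u x ∂(bm15 χ ν u)

section Helpers

variable {α : Type*} [MeasurableSpace α]

lemma integrable_of_bdd15 {μ : Measure α} [IsFiniteMeasure μ] {f : α → ℝ}
    (hf : Measurable f) {B : ℝ} (hB : ∀ x, |f x| ≤ B) : Integrable f μ :=
  (integrable_const B).mono' hf.aestronglyMeasurable
    (Filter.Eventually.of_forall fun x => by simpa using hB x)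

lemma integral_pos_of_bdd15 {μ : Measure α} [IsFiniteMeasure μ] (hμ : μ ≠ 0) {f : α → ℝ}
    (hf : Integrable f μ) {lo : ℝ} (hlo : 0 < lo) (hbd : ∀ x, lo ≤ f x) :
    0 < ∫ x, f x ∂μ := by
  have h1 : ∫ _x, lo ∂μ ≤ ∫ x, f x ∂μ := integral_mono (integrable_const lo) hf hbd
  rw [integral_const, smul_eq_mul] at h1
  have h2 : 0 < (μ Set.univ).toReal := by
    refine ENNReal.toReal_pos ?_ (measure_ne_top _ _)
    simpa [Measure.measure_univ_eq_zero] using hμ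
  rw [measureReal_def] at h1
  nlinarith

lemma abs_mul_le15 {a b A B : ℝ} (ha : |a| ≤ A) (hb : |b| ≤ B) : |a * b| ≤ A * B := by
  rw [abs_mul]
  exact mul_le_mul ha hb (abs_nonneg _) ((abs_nonneg a).trans ha)

lemma abs_le_of_Icc15 {a lo hi : ℝ} (h : a ∈ Set.Icc lo hi) : |a| ≤ |lo| + |hi| := by
  obtain ⟨h1, h2⟩ := h
  rw [abs_le]
  constructor
  · calc -(|lo| + |hi|) ≤ -|lo| := by nlinarith [abs_nonneg (hi : ℝ)]
    _ ≤ lo := neg_abs_le lo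
    _ ≤ a := h1
  · calc a ≤ hi := h2
    _ ≤ |hi| := le_abs_self hi
    _ ≤ |lo| + |hi| := by nlinarith [abs_nonneg (lo : ℝ)]

lemma abs_le_hi15 {a lo hi : ℝ} (h : a ∈ Set.Icc lo hi) (hlo : 0 ≤ lo) : |a| ≤ hi := by
  rw [abs_of_nonneg (hlo.trans h.1)]; exact h.2

lemma mul_mem_Icc15 {a b la ua lb ub : ℝ} (h1 : a ∈ Set.Icc la ua) (h2 : b ∈ Set.Icc lb ub)
    (hla : 0 < la) (hlb : 0 < lb) : a * b ∈ Set.Icc (la * lb) (ua * ub) := by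
  obtain ⟨h3, h4⟩ := h1; obtain ⟨h5, h6⟩ := h2
  have ha : 0 < a := hla.trans_le h3
  have hb : 0 < b := hlb.trans_le h5
  constructor
  · calc la * lb ≤ a * lb := mul_le_mul_of_nonneg_right h3 hlb.le
    _ ≤ a * b := mul_le_mul_of_nonneg_left h5 ha.le
  · calc a * b ≤ a * ub := mul_le_mul_of_nonneg_left h6 ha.le
    _ ≤ ua * ub := mul_le_mul_of_nonneg_right h4 (hb.trans_le h6).le

lemma integral_mem_Icc15 {μ : Measure α} [IsFiniteMeasure μ] {f : α → ℝ}
    (hf : Measurable f) {lo hi : ℝ} (hb : ∀ x, f x ∈ Set.Icc lo hi) :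
    ∫ x, f x ∂μ ∈ Set.Icc ((μ Set.univ).toReal * lo) ((μ Set.univ).toReal * hi) := by
  have hint : Integrable f μ := integrable_of_bdd15 hf (fun x => abs_le_of_Icc15 (hb x))
  constructor
  · have := integral_mono (μ := μ) (integrable_const lo) hint (fun x => (hb x).1)
    rwa [integral_const, smul_eq_mul] at this
  · have := integral_mono (μ := μ) hint (integrable_const hi) (fun x => (hb x).2)
    rwa [integral_const, smul_eq_mul] at this

end Helpers

lemma bm15_ne_zero {χ ν : Measure X} [IsProbabilityMeasure χ]
    (hν : ν ≠ 0) (u : ℕ) : bm15 χ ν u ≠ 0 := by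
  unfold bm15; split
  · exact IsProbabilityMeasure.ne_zero χ
  · exact hν

variable {χ ν : Measure X} {q : X → X → ℝ} {g : ℕ → X → ℝ} {εlo εhi δlo δhi : ℝ}

lemma wden15_prop [IsProbabilityMeasure χ] [IsFiniteMeasure ν]
    (S : Hyp15 χ ν q g εlo εhi δlo δhi) (u : ℕ) :
    Measurable (wden15 χ ν q g u) ∧
      ∃ lo hi : ℝ, 0 < lo ∧ ∀ x, wden15 χ ν q g u x ∈ Set.Icc lo hi := by
  induction u with
  | zero => exact ⟨S.hg 0, δlo, δhi, S.hδlo, fun x => S.hgb 0 x⟩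
  | succ u ih =>
    obtain ⟨hm, lo, hi, hlo, hbd⟩ := ih
    set μ := bm15 χ ν u with hμdef
    have hμ0 : μ ≠ 0 := bm15_ne_zero S.hν u
    have hmass : 0 < (μ Set.univ).toReal := by
      refine ENNReal.toReal_pos ?_ (measure_ne_top _ _)
      simpa [Measure.measure_univ_eq_zero] using hμ0
    have hqm : ∀ y, Measurable fun x => q x y * wden15 χ ν q g u x := by
      intro y
      exact (S.hq.comp (measurable_id.prodMk measurable_const)).mul hm
    have hqbd : ∀ y x, q x y * wden15 χ ν q g u x ∈ Set.Icc (εlo * lo) (εhi * hi) := by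
      intro y x
      exact mul_mem_Icc15 (S.hqb x y) (hbd x) S.hεlo hlo
    have hIm : Measurable fun y => ∫ x, q x y * wden15 χ ν q g u x ∂μ := by
      have hF : Measurable fun p : X × X => q p.1 p.2 * wden15 χ ν q g u p.1 :=
        S.hq.mul (hm.comp measurable_fst)
      exact (hF.stronglyMeasurable.integral_prod_left').measurable
    have hIb : ∀ y, (∫ x, q x y * wden15 χ ν q g u x ∂μ) ∈
        Set.Icc ((μ Set.univ).toReal * (εlo * lo)) ((μ Set.univ).toReal * (εhi * hi)) :=
      fun y => integral_mem_Icc15 (hqm y) (hqbd y)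
    have h5 : 0 < (μ Set.univ).toReal * (εlo * lo) := by
      have := S.hεlo
      positivity
    exact ⟨(S.hg (u + 1)).mul hIm,
      δlo * ((μ Set.univ).toReal * (εlo * lo)), δhi * ((μ Set.univ).toReal * (εhi * hi)),
      mul_pos S.hδlo h5, fun y => mul_mem_Icc15 (S.hgb (u + 1) y) (hIb y) S.hδlo h5⟩

lemma Gam15_integrable [IsProbabilityMeasure χ] [IsFiniteMeasure ν]
    (S : Hyp15 χ ν q g εlo εhi δlo δhi) (u : ℕ) {f : X → ℝ} (hf : Measurable f)
    {B : ℝ} (hB : ∀ x, |f x| ≤ B) :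
    Integrable (fun x => f x * wden15 χ ν q g u x) (bm15 χ ν u) := by
  obtain ⟨hwm, lo, hi, hlo, hwb⟩ := wden15_prop S u
  exact integrable_of_bdd15 (hf.mul hwm)
    (fun x => abs_mul_le15 (hB x) (abs_le_of_Icc15 (hwb x)))

lemma Gam15_pos [IsProbabilityMeasure χ] [IsFiniteMeasure ν]
    (S : Hyp15 χ ν q g εlo εhi δlo δhi) (u : ℕ) {f : X → ℝ} (hf : Measurable f)
    {lo hi : ℝ} (hlo : 0 < lo) (hb : ∀ x, f x ∈ Set.Icc lo hi) :
    0 < Gam15 χ ν q g u f := by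
  obtain ⟨hwm, wlo, whi, hwlo, hwb⟩ := wden15_prop S u
  refine integral_pos_of_bdd15 (bm15_ne_zero S.hν u) ?_ (mul_pos hlo hwlo)
    (fun x => (mul_mem_Icc15 (hb x) (hwb x) hlo hwlo).1)
  exact Gam15_integrable S u hf (fun x => abs_le_of_Icc15 (hb x))

lemma Gam15_one_pos [IsProbabilityMeasure χ] [IsFiniteMeasure ν]
    (S : Hyp15 χ ν q g εlo εhi δlo δhi) (u : ℕ) :
    0 < Gam15 χ ν q g u (fun _ => 1) :=
  Gam15_pos S u measurable_const one_pos (fun _ => ⟨le_refl 1, le_refl 1⟩)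

lemma Gam15_abs_le [IsProbabilityMeasure χ] [IsFiniteMeasure ν]
    (S : Hyp15 χ ν q g εlo εhi δlo δhi) (u : ℕ) {f : X → ℝ} (hf : Measurable f)
    {B : ℝ} (hB : ∀ x, |f x| ≤ B) :
    |Gam15 χ ν q g u f| ≤ B * Gam15 χ ν q g u (fun _ => 1) := by
  obtain ⟨hwm, wlo, whi, hwlo, hwb⟩ := wden15_prop S u
  have h1 : |Gam15 χ ν q g u f| ≤ ∫ x, |f x| * |wden15 χ ν q g u x| ∂(bm15 χ ν u) := by
    simpa [Gam15, Real.norm_eq_abs] using norm_integral_le_integral_norm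
      (μ := bm15 χ ν u) (fun x => f x * wden15 χ ν q g u x)
  have h2 : ∫ x, |f x| * |wden15 χ ν q g u x| ∂(bm15 χ ν u) ≤
      ∫ x, B * wden15 χ ν q g u x ∂(bm15 χ ν u) := by
    refine integral_mono ?_
      (Gam15_integrable S u measurable_const
        (B := |B|) (fun _ => le_refl |B|)) (fun x => ?_)
    · have := (Gam15_integrable S u hf hB).abs
      simpa [abs_mul] using this
    · rw [abs_of_nonneg (hwlo.le.trans (hwb x).1)]
      exact mul_le_mul_of_nonneg_right (hB x) (hwlo.le.trans (hwb x).1)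
  have h3 : ∫ x, B * wden15 χ ν q g u x ∂(bm15 χ ν u) =
      B * Gam15 χ ν q g u (fun _ => 1) := by
    rw [integral_const_mul]
    simp only [Gam15, one_mul]
  linarith

/-- The Fubini step for the unnormalised filter functional. -/
lemma Gam15_succ [IsProbabilityMeasure χ] [IsFiniteMeasure ν]
    (S : Hyp15 χ ν q g εlo εhi δlo δhi) (u : ℕ) {f : X → ℝ} (hf : Measurable f)
    {B : ℝ} (hB : ∀ x, |f x| ≤ B) :
    Gam15 χ ν q g (u + 1) f =
      Gam15 χ ν q g u (fun x => ∫ y, f y * (g (u + 1) y * q x y) ∂ν) := by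
  obtain ⟨hwm, wlo, whi, hwlo, hwb⟩ := wden15_prop S u
  set μ := bm15 χ ν u with hμdef
  have key : Integrable (Function.uncurry fun y x =>
      (f y * g (u + 1) y) * (q x y * wden15 χ ν q g u x)) (ν.prod μ) := by
    refine integrable_of_bdd15 ?_
      (B := (B * (|δlo| + |δhi|)) * ((|εlo| + |εhi|) * (|wlo| + |whi|))) (fun p => ?_)
    · apply Measurable.mul
      · exact (hf.comp measurable_fst).mul ((S.hg (u + 1)).comp measurable_fst)
      · exact (S.hq.comp (measurable_snd.prodMk measurable_fst)).mul
          (hwm.comp measurable_snd)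
    · refine abs_mul_le15 (abs_mul_le15 (hB _) (abs_le_of_Icc15 (S.hgb _ _)))
        (abs_mul_le15 (abs_le_of_Icc15 (S.hqb _ _)) (abs_le_of_Icc15 (hwb _)))
  calc Gam15 χ ν q g (u + 1) f
      = ∫ y, f y * (g (u + 1) y * ∫ x, q x y * wden15 χ ν q g u x ∂μ) ∂ν := by
        rw [Gam15, bm15_succ]
        rfl
    _ = ∫ y, ∫ x, (f y * g (u + 1) y) * (q x y * wden15 χ ν q g u x) ∂μ ∂ν := by
        refine integral_congr_ae (Filter.Eventually.of_forall fun y => ?_)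
        dsimp only
        rw [integral_const_mul, mul_assoc]
    _ = ∫ x, ∫ y, (f y * g (u + 1) y) * (q x y * wden15 χ ν q g u x) ∂ν ∂μ :=
        (integral_integral_swap key)
    _ = ∫ x, (∫ y, f y * (g (u + 1) y * q x y) ∂ν) * wden15 χ ν q g u x ∂μ := by
        refine integral_congr_ae (Filter.Eventually.of_forall fun x => ?_)
        dsimp only
        rw [← integral_mul_const]
        refine integral_congr_ae (Filter.Eventually.of_forall fun y => ?_)
        ring
    _ = Gam15 χ ν q g u (fun x => ∫ y, f y * (g (u + 1) y * q x y) ∂ν) := rfl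

lemma nonempty15 {χ : Measure X} [IsProbabilityMeasure χ] : Nonempty X := by
  by_contra hX
  rw [not_nonempty_iff] at hX
  have h1 : (χ : Measure X) Set.univ = 1 := measure_univ
  rw [Set.univ_eq_empty_iff.mpr hX] at h1
  simp at h1

lemma integral_abs_le15 {α : Type*} [MeasurableSpace α] {μ : Measure α} [IsFiniteMeasure μ]
    {f : α → ℝ} (hf : Measurable f) {B : ℝ} (hB : ∀ x, |f x| ≤ B) :
    |∫ x, f x ∂μ| ≤ (μ Set.univ).toReal * B := by
  have h1 : |∫ x, f x ∂μ| ≤ ∫ x, |f x| ∂μ := by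
    simpa [Real.norm_eq_abs] using norm_integral_le_integral_norm (μ := μ) f
  have h2 : ∫ x, |f x| ∂μ ≤ ∫ _x, B ∂μ :=
    integral_mono (integrable_of_bdd15 hf hB).abs (integrable_const B)
      (fun x => by simpa using hB x)
  rw [integral_const, smul_eq_mul] at h2
  rw [measureReal_def] at h2
  linarith

/-- Measurability and boundedness of the one-step prediction operator. -/
lemma pred15_meas [IsFiniteMeasure ν] (S : Hyp15 χ ν q g εlo εhi δlo δhi) (u : ℕ)
    {f : X → ℝ} (hf : Measurable f) :
    Measurable fun x => ∫ y, f y * (g (u + 1) y * q x y) ∂ν := by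
  have hF : Measurable fun p : X × X => f p.2 * (g (u + 1) p.2 * q p.1 p.2) :=
    (hf.comp measurable_snd).mul (((S.hg (u + 1)).comp measurable_snd).mul S.hq)
  exact (hF.stronglyMeasurable.integral_prod_right').measurable

lemma pred15_bdd [IsFiniteMeasure ν] (S : Hyp15 χ ν q g εlo εhi δlo δhi) (u : ℕ)
    {f : X → ℝ} (hf : Measurable f) {B : ℝ} (hB : ∀ x, |f x| ≤ B) (x : X) :
    |∫ y, f y * (g (u + 1) y * q x y) ∂ν| ≤
      (ν Set.univ).toReal * (B * ((|δlo| + |δhi|) * (|εlo| + |εhi|))) := by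
  refine integral_abs_le15 ?_ (fun y => abs_mul_le15 (hB y)
    (abs_mul_le15 (abs_le_of_Icc15 (S.hgb _ _)) (abs_le_of_Icc15 (S.hqb _ _))))
  exact hf.mul (((S.hg (u + 1))).mul (S.hq.comp (measurable_const.prodMk measurable_id)))

/-- The filters are the normalised versions of the `Gam15` functionals. -/
lemma filt0_eq15 [IsProbabilityMeasure χ] [IsFiniteMeasure ν]
    (S : Hyp15 χ ν q g εlo εhi δlo δhi) (u : ℕ) :
    ∀ (f : X → ℝ), Measurable f → ∀ B : ℝ, (∀ x, |f x| ≤ B) →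
      filt0 χ ν q g u f = Gam15 χ ν q g u f / Gam15 χ ν q g u (fun _ => 1) := by
  induction u with
  | zero =>
    intro f hf B hB
    simp [filt0, Gam15, bm15_zero, wden15, one_mul]
  | succ u ih =>
    intro f hf B hB
    have hden : (fun x => ∫ x', g (u + 1) x' * q x x' ∂ν) =
        fun x => ∫ y, (1 : ℝ) * (g (u + 1) y * q x y) ∂ν := by
      funext x
      refine integral_congr_ae (Filter.Eventually.of_forall fun y => ?_)
      simp
    have h1 : filt0 χ ν q g (u + 1) f =
        filt0 χ ν q g u (fun x => ∫ y, f y * (g (u + 1) y * q x y) ∂ν) /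
          filt0 χ ν q g u (fun x => ∫ y, (1 : ℝ) * (g (u + 1) y * q x y) ∂ν) := by
      rw [← hden]; simp [filt0]
    have hone : ∀ x : X, |(fun _ : X => (1 : ℝ)) x| ≤ (1 : ℝ) := fun _ => by simp
    rw [h1, ih _ (pred15_meas S u hf) _ (pred15_bdd S u hf hB),
      ih _ (pred15_meas S u measurable_const) _
        (pred15_bdd S u measurable_const hone),
      ← Gam15_succ S u hf hB,
      ← Gam15_succ S u measurable_const hone]
    have hc : Gam15 χ ν q g u (fun _ => 1) ≠ 0 := (Gam15_one_pos S u).ne'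
    field_simp

lemma Gam15_const15 [IsProbabilityMeasure χ] [IsFiniteMeasure ν] (u : ℕ) (c : ℝ) :
    Gam15 χ ν q g u (fun _ => c) = c * Gam15 χ ν q g u (fun _ => 1) := by
  simp only [Gam15, one_mul]
  rw [← integral_const_mul]

lemma Gam15_mono15 [IsProbabilityMeasure χ] [IsFiniteMeasure ν]
    (S : Hyp15 χ ν q g εlo εhi δlo δhi) (u : ℕ) {f f' : X → ℝ}
    (hf : Measurable f) {B : ℝ} (hB : ∀ x, |f x| ≤ B)
    (hf' : Measurable f') {B' : ℝ} (hB' : ∀ x, |f' x| ≤ B')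
    (hle : ∀ x, f x ≤ f' x) :
    Gam15 χ ν q g u f ≤ Gam15 χ ν q g u f' := by
  obtain ⟨hwm, wlo, whi, hwlo, hwb⟩ := wden15_prop S u
  exact integral_mono (Gam15_integrable S u hf hB) (Gam15_integrable S u hf' hB')
    (fun x => mul_le_mul_of_nonneg_right (hle x) (hwlo.le.trans (hwb x).1))

/-- Lower bound on `Γ_u(q(·,y))`. -/
lemma Gam15_q_lb [IsProbabilityMeasure χ] [IsFiniteMeasure ν]
    (S : Hyp15 χ ν q g εlo εhi δlo δhi) (u : ℕ) (y : X) :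
    εlo * Gam15 χ ν q g u (fun _ => 1) ≤ Gam15 χ ν q g u (fun x => q x y) := by
  rw [← Gam15_const15 u εlo]
  refine Gam15_mono15 S u measurable_const (B := |εlo|) (fun _ => le_refl _)
    (S.hq.comp (measurable_id.prodMk measurable_const)) (B' := |εlo| + |εhi|)
    (fun x => abs_le_of_Icc15 (S.hqb x y)) (fun x => (S.hqb x y).1)

lemma Gam15_q_pos [IsProbabilityMeasure χ] [IsFiniteMeasure ν]
    (S : Hyp15 χ ν q g εlo εhi δlo δhi) (u : ℕ) (y : X) :
    0 < Gam15 χ ν q g u (fun x => q x y) :=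
  lt_of_lt_of_le (mul_pos S.hεlo (Gam15_one_pos S u)) (Gam15_q_lb S u y)

/-- Measurability and boundedness of the backward statistics. -/
lemma TstF15_prop [IsProbabilityMeasure χ] [IsFiniteMeasure ν]
    (S : Hyp15 χ ν q g εlo εhi δlo δhi) (s : ℕ) {h : X → ℝ} {C : ℝ}
    (hh : Measurable h) (hhb : ∀ x, |h x| ≤ C) (k : ℕ) :
    Measurable (TstF q (filt0 χ ν q g) s h k) ∧
      ∃ D : ℝ, 0 ≤ D ∧ ∀ x, |TstF q (filt0 χ ν q g) s h k x| ≤ D := by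
  induction k with
  | zero =>
    obtain ⟨x0⟩ : Nonempty X := nonempty15 (χ := χ)
    exact ⟨hh, C, (abs_nonneg _).trans (hhb x0), hhb⟩
  | succ k ih =>
    obtain ⟨hTm, D, hD0, hTb⟩ := ih
    set T := TstF q (filt0 χ ν q g) s h k with hTdef
    set u := s + k with hudef
    obtain ⟨hwm, wlo, whi, hwlo, hwb⟩ := wden15_prop S u
    have hqy : ∀ y : X, Measurable fun x => q x y :=
      fun y => S.hq.comp (measurable_id.prodMk measurable_const)
    have hf1m : ∀ y : X, Measurable fun x => T x * q x y :=
      fun y => hTm.mul (hqy y)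
    have hf1b : ∀ y x : X, |T x * q x y| ≤ D * εhi :=
      fun y x => abs_mul_le15 (hTb x) (abs_le_hi15 (S.hqb x y) S.hεlo.le)
    have hform : TstF q (filt0 χ ν q g) s h (k + 1) = fun y =>
        Gam15 χ ν q g u (fun x => T x * q x y) / Gam15 χ ν q g u (fun x => q x y) := by
      funext y
      show filt0 χ ν q g u (fun x => T x * q x y) / filt0 χ ν q g u (fun x => q x y) = _
      rw [filt0_eq15 S u _ (hf1m y) _ (hf1b y),
        filt0_eq15 S u _ (hqy y) (|εlo| + |εhi|) (fun x => abs_le_of_Icc15 (S.hqb x y))]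
      have hc : Gam15 χ ν q g u (fun _ => 1) ≠ 0 := (Gam15_one_pos S u).ne'
      field_simp
    constructor
    · rw [hform]
      have hnum : Measurable fun y => Gam15 χ ν q g u (fun x => T x * q x y) := by
        have hF : Measurable fun p : X × X =>
            T p.1 * q p.1 p.2 * wden15 χ ν q g u p.1 :=
          ((hTm.comp measurable_fst).mul S.hq).mul (hwm.comp measurable_fst)
        exact (hF.stronglyMeasurable.integral_prod_left').measurable
      have hden : Measurable fun y => Gam15 χ ν q g u (fun x => q x y) := by
        have hF : Measurable fun p : X × X => q p.1 p.2 * wden15 χ ν q g u p.1 :=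
          S.hq.mul (hwm.comp measurable_fst)
        exact (hF.stronglyMeasurable.integral_prod_left').measurable
      exact hnum.div hden
    · have hεhi0 : (0:ℝ) ≤ εhi := (S.hεlo.trans_le S.hεhi).le
      refine ⟨D * εhi / εlo, div_nonneg (mul_nonneg hD0 hεhi0) S.hεlo.le, fun y => ?_⟩
      rw [hform]
      have hG1 : 0 < Gam15 χ ν q g u (fun _ => 1) := Gam15_one_pos S u
      have hnum : |Gam15 χ ν q g u (fun x => T x * q x y)| ≤
          (D * εhi) * Gam15 χ ν q g u (fun _ => 1) :=
        Gam15_abs_le S u (hf1m y) (hf1b y)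
      have hden : εlo * Gam15 χ ν q g u (fun _ => 1) ≤
          |Gam15 χ ν q g u (fun x => q x y)| := by
        rw [abs_of_pos (Gam15_q_pos S u y)]
        exact Gam15_q_lb S u y
      rw [abs_div]
      calc |Gam15 χ ν q g u (fun x => T x * q x y)| /
            |Gam15 χ ν q g u (fun x => q x y)| ≤
          ((D * εhi) * Gam15 χ ν q g u (fun _ => 1)) /
            (εlo * Gam15 χ ν q g u (fun _ => 1)) :=
          div_le_div₀ (mul_nonneg (mul_nonneg hD0 hεhi0) hG1.le) hnum
            (mul_pos S.hεlo hG1) hden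
        _ = D * εhi / εlo := mul_div_mul_right _ _ hG1.ne'

/-- The key backward identity in unnormalised form. -/
lemma TstF15_mul [IsProbabilityMeasure χ] [IsFiniteMeasure ν]
    (S : Hyp15 χ ν q g εlo εhi δlo δhi) (s : ℕ) {h : X → ℝ} {C : ℝ}
    (hh : Measurable h) (hhb : ∀ x, |h x| ≤ C) (k : ℕ) (y : X) :
    TstF q (filt0 χ ν q g) s h (k + 1) y * Gam15 χ ν q g (s + k) (fun x => q x y) =
      Gam15 χ ν q g (s + k) (fun x => TstF q (filt0 χ ν q g) s h k x * q x y) := by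
  obtain ⟨hTm, D, hD0, hTb⟩ := TstF15_prop S s hh hhb k
  have hqy : Measurable fun x => q x y :=
    S.hq.comp (measurable_id.prodMk measurable_const)
  have h1 : TstF q (filt0 χ ν q g) s h (k + 1) y =
      Gam15 χ ν q g (s + k) (fun x => TstF q (filt0 χ ν q g) s h k x * q x y) /
        Gam15 χ ν q g (s + k) (fun x => q x y) := by
    show filt0 χ ν q g (s + k) _ / filt0 χ ν q g (s + k) _ = _
    rw [filt0_eq15 S (s + k) (fun x => TstF q (filt0 χ ν q g) s h k x * q x y) (hTm.mul hqy) (D * εhi)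
        (fun x => abs_mul_le15 (hTb x) (abs_le_hi15 (S.hqb x y) S.hεlo.le)),
      filt0_eq15 S (s + k) _ hqy (|εlo| + |εhi|) (fun x => abs_le_of_Icc15 (S.hqb x y))]
    have hc : Gam15 χ ν q g (s + k) (fun _ => 1) ≠ 0 := (Gam15_one_pos S (s + k)).ne'
    field_simp
  rw [h1, div_mul_cancel₀ _ (Gam15_q_pos S (s + k) y).ne']

/-- The inductive step on the `Γ` side: pushing the backward statistic one step. -/
lemma Gam15_T_step [IsProbabilityMeasure χ] [IsFiniteMeasure ν]
    (S : Hyp15 χ ν q g εlo εhi δlo δhi) (s k : ℕ) {h : X → ℝ} {C : ℝ}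
    (hh : Measurable h) (hhb : ∀ x, |h x| ≤ C)
    {f : X → ℝ} (hf : Measurable f) {B : ℝ} (hB : ∀ x, |f x| ≤ B) :
    Gam15 χ ν q g (s + k + 1) (fun y => TstF q (filt0 χ ν q g) s h (k + 1) y * f y) =
      Gam15 χ ν q g (s + k) (fun x => TstF q (filt0 χ ν q g) s h k x *
        ∫ y, f y * (g (s + k + 1) y * q x y) ∂ν) := by
  set u := s + k with hudef
  set T := TstF q (filt0 χ ν q g) s h k with hTdef
  set T' := TstF q (filt0 χ ν q g) s h (k + 1) with hT'def
  obtain ⟨hTm, D, hD0, hTb⟩ := TstF15_prop S s hh hhb k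
  obtain ⟨hwm, wlo, whi, hwlo, hwb⟩ := wden15_prop S u
  have key : Integrable (Function.uncurry fun y x =>
      (f y * g (u + 1) y) * ((T x * q x y) * wden15 χ ν q g u x)) (ν.prod (bm15 χ ν u)) := by
    refine integrable_of_bdd15 ?_
      (B := (B * (|δlo| + |δhi|)) * ((D * (|εlo| + |εhi|)) * (|wlo| + |whi|))) (fun p => ?_)
    · exact ((hf.comp measurable_fst).mul ((S.hg (u + 1)).comp measurable_fst)).mul
        (((hTm.comp measurable_snd).mul
          (S.hq.comp (measurable_snd.prodMk measurable_fst))).mul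
          (hwm.comp measurable_snd))
    · exact abs_mul_le15 (abs_mul_le15 (hB _) (abs_le_of_Icc15 (S.hgb _ _)))
        (abs_mul_le15 (abs_mul_le15 (hTb _) (abs_le_of_Icc15 (S.hqb _ _)))
          (abs_le_of_Icc15 (hwb _)))
  calc Gam15 χ ν q g (u + 1) (fun y => T' y * f y)
      = ∫ y, (T' y * f y) * wden15 χ ν q g (u + 1) y ∂ν := by
        rw [Gam15, bm15_succ]
    _ = ∫ y, ∫ x, (f y * g (u + 1) y) * ((T x * q x y) * wden15 χ ν q g u x)
          ∂(bm15 χ ν u) ∂ν := by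
        refine integral_congr_ae (Filter.Eventually.of_forall fun y => ?_)
        dsimp only
        have e1 : wden15 χ ν q g (u + 1) y =
            g (u + 1) y * Gam15 χ ν q g u (fun x => q x y) := rfl
        have e2 : T' y * Gam15 χ ν q g u (fun x => q x y) =
            Gam15 χ ν q g u (fun x => T x * q x y) := TstF15_mul S s hh hhb k y
        calc (T' y * f y) * wden15 χ ν q g (u + 1) y
            = (f y * g (u + 1) y) * (T' y * Gam15 χ ν q g u (fun x => q x y)) := by
              rw [e1]; ring
          _ = (f y * g (u + 1) y) * Gam15 χ ν q g u (fun x => T x * q x y) := by rw [e2]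
          _ = ∫ x, (f y * g (u + 1) y) * ((T x * q x y) * wden15 χ ν q g u x)
              ∂(bm15 χ ν u) := (integral_const_mul _ _).symm
    _ = ∫ x, ∫ y, (f y * g (u + 1) y) * ((T x * q x y) * wden15 χ ν q g u x)
          ∂ν ∂(bm15 χ ν u) := integral_integral_swap key
    _ = ∫ x, (T x * ∫ y, f y * (g (u + 1) y * q x y) ∂ν) * wden15 χ ν q g u x
          ∂(bm15 χ ν u) := by
        refine integral_congr_ae (Filter.Eventually.of_forall fun x => ?_)
        dsimp only
        have e3 : (T x * ∫ y, f y * (g (u + 1) y * q x y) ∂ν) * wden15 χ ν q g u x =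
            ∫ y, (f y * (g (u + 1) y * q x y)) * (T x * wden15 χ ν q g u x) ∂ν := by
          rw [integral_mul_const]; ring
        rw [e3]
        refine integral_congr_ae (Filter.Eventually.of_forall fun y => ?_)
        ring
    _ = Gam15 χ ν q g u (fun x => T x * ∫ y, f y * (g (u + 1) y * q x y) ∂ν) := rfl

lemma jointDens_meas15 (S : Hyp15 χ ν q g εlo εhi δlo δhi) (t : ℕ) :
    Measurable (jointDens t q g) := by
  unfold jointDens
  have h1 : Measurable fun x : Fin (t + 1) → X => g 0 (x 0) :=
    (S.hg 0).comp (measurable_pi_apply 0)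
  refine h1.mul ?_
  refine Finset.measurable_prod _ (fun i _ => ?_)
  have h2 : Measurable fun x : Fin (t + 1) → X => q (x i.castSucc) (x i.succ) := by
    have := S.hq.comp ((measurable_pi_apply (X := fun _ : Fin (t + 1) => X)
      i.castSucc).prodMk (measurable_pi_apply i.succ))
    exact this
  have h3 : Measurable fun x : Fin (t + 1) → X => g (i.1 + 1) (x i.succ) :=
    (S.hg _).comp (measurable_pi_apply _)
  exact h2.mul h3

lemma jointDens_bdd15 (S : Hyp15 χ ν q g εlo εhi δlo δhi) (t : ℕ)
    (x : Fin (t + 1) → X) :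
    jointDens t q g x ∈ Set.Icc (δlo * (εlo * δlo) ^ t) (δhi * (εhi * δhi) ^ t) := by
  have hplo : (0:ℝ) < (εlo * δlo) ^ t := pow_pos (mul_pos S.hεlo S.hδlo) t
  refine mul_mem_Icc15 (S.hgb 0 _) ⟨?_, ?_⟩ S.hδlo hplo
  · calc (εlo * δlo) ^ t = ∏ _i : Fin t, (εlo * δlo) := by
          rw [Finset.prod_const, Finset.card_univ, Fintype.card_fin]
      _ ≤ ∏ i : Fin t, (q (x i.castSucc) (x i.succ) * g (i.1 + 1) (x i.succ)) := by
          refine Finset.prod_le_prod (fun i _ => (mul_pos S.hεlo S.hδlo).le) (fun i _ => ?_)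
          exact (mul_mem_Icc15 (S.hqb _ _) (S.hgb _ _) S.hεlo S.hδlo).1
  · calc ∏ i : Fin t, (q (x i.castSucc) (x i.succ) * g (i.1 + 1) (x i.succ))
        ≤ ∏ _i : Fin t, (εhi * δhi) := by
          refine Finset.prod_le_prod (fun i _ => ?_) (fun i _ => ?_)
          · exact (mul_pos (S.hεlo.trans_le (S.hqb _ _).1)
              (S.hδlo.trans_le (S.hgb _ _).1)).le
          · exact (mul_mem_Icc15 (S.hqb _ _) (S.hgb _ _) S.hεlo S.hδlo).2
      _ = (εhi * δhi) ^ t := by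
          rw [Finset.prod_const, Finset.card_univ, Fintype.card_fin]

instance baseMeas.instFinite (t : ℕ) (χ ν : Measure X) [IsProbabilityMeasure χ]
    [IsFiniteMeasure ν] : IsFiniteMeasure (baseMeas t χ ν) := by
  unfold baseMeas
  have : ∀ i : Fin (t + 1), IsFiniteMeasure (if i = 0 then χ else ν) := by
    intro i; split <;> infer_instance
  infer_instance

lemma jointDens_snoc15 (u : ℕ) (x' : Fin (u + 1) → X) (y : X) :
    jointDens (u + 1) q g (Fin.snoc x' y) =
      jointDens u q g x' * (q (x' (Fin.last u)) y * g (u + 1) y) := by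
  have h0 : (Fin.snoc x' y : Fin (u + 2) → X) 0 = x' 0 := by
    rw [show (0 : Fin (u + 2)) = Fin.castSucc 0 from (Fin.castSucc_zero).symm,
      Fin.snoc_castSucc]
  unfold jointDens
  rw [Fin.prod_univ_castSucc, h0]
  simp only [Fin.succ_castSucc, Fin.snoc_castSucc, Fin.succ_last, Fin.snoc_last,
    Fin.coe_castSucc, Fin.val_last]
  ring

/-- Peeling off the last coordinate of the path integral. -/
lemma snoc_step15 [IsProbabilityMeasure χ] [IsFiniteMeasure ν]
    (S : Hyp15 χ ν q g εlo εhi δlo δhi) (u : ℕ)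
    {F : (Fin (u + 1) → X) → ℝ} (hF : Measurable F) {BF : ℝ} (hFb : ∀ x, |F x| ≤ BF)
    {G : X → ℝ} (hG : Measurable G) {BG : ℝ} (hGb : ∀ x, |G x| ≤ BG) :
    (∫ x, F (fun i => x i.castSucc) * G (x (Fin.last (u + 1))) * jointDens (u + 1) q g x
        ∂(baseMeas (u + 1) χ ν)) =
      ∫ x, F x * (∫ y, G y * (g (u + 1) y * q (x (Fin.last u)) y) ∂ν) * jointDens u q g x
        ∂(baseMeas u χ ν) := by
  classical
  set J := baseMeas u χ ν with hJdef
  set e := MeasurableEquiv.piFinSuccAbove (fun _ : Fin (u + 2) => X) (Fin.last (u + 1))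
    with hedef
  have hmp : MeasurePreserving e (baseMeas (u + 1) χ ν) (ν.prod J) := by
    haveI hsf : ∀ i : Fin (u + 2),
        SigmaFinite ((fun i : Fin (u + 2) => if i = 0 then χ else ν) i) := by
      intro i; dsimp only; split <;> infer_instance
    have h1 := measurePreserving_piFinSuccAbove
      (fun i : Fin (u + 2) => if i = 0 then χ else ν) (Fin.last (u + 1))
    have h4 : ((fun i : Fin (u + 2) => if i = 0 then χ else ν) (Fin.last (u + 1))).prod
        (Measure.pi fun j : Fin (u + 1) =>
          (fun i : Fin (u + 2) => if i = 0 then χ else ν) ((Fin.last (u + 1)).succAbove j)) =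
        ν.prod J := by
      have hlast : ((fun i : Fin (u + 2) => if i = 0 then χ else ν) (Fin.last (u + 1))) = ν := by
        simp only []
        rw [if_neg]
        simp [Fin.ext_iff]
      have hrest : (Measure.pi fun j : Fin (u + 1) =>
          (fun i : Fin (u + 2) => if i = 0 then χ else ν) ((Fin.last (u + 1)).succAbove j)) =
          J := by
        rw [hJdef]
        unfold baseMeas
        congr 1
        funext j
        simp only [Fin.succAbove_last]
        by_cases hj : j = 0
        · simp [hj]
        · rw [if_neg, if_neg hj]
          simpa [Fin.castSucc_eq_zero_iff] using hj
      rw [hlast, hrest]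
    rw [h4] at h1
    exact h1
  set Ψ : X × (Fin (u + 1) → X) → ℝ := fun p =>
    F p.2 * G p.1 * (jointDens u q g p.2 *
      (q (p.2 (Fin.last u)) p.1 * g (u + 1) p.1)) with hΨdef
  have hΨm : Measurable Ψ := by
    have m1 : Measurable fun p : X × (Fin (u + 1) → X) => F p.2 := hF.comp measurable_snd
    have m2 : Measurable fun p : X × (Fin (u + 1) → X) => G p.1 := hG.comp measurable_fst
    have m3 : Measurable fun p : X × (Fin (u + 1) → X) => jointDens u q g p.2 :=
      (jointDens_meas15 S u).comp measurable_snd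
    have m4 : Measurable fun p : X × (Fin (u + 1) → X) => q (p.2 (Fin.last u)) p.1 := by
      have := S.hq.comp ((((measurable_pi_apply (X := fun _ : Fin (u + 1) => X)
        (Fin.last u))).comp measurable_snd).prodMk measurable_fst)
      exact this
    have m5 : Measurable fun p : X × (Fin (u + 1) → X) => g (u + 1) p.1 :=
      (S.hg (u + 1)).comp measurable_fst
    exact (m1.mul m2).mul (m3.mul (m4.mul m5))
  have hΨb : ∀ p, |Ψ p| ≤ (BF * BG) * ((|δlo * (εlo * δlo) ^ u| + |δhi * (εhi * δhi) ^ u|) *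
      ((|εlo| + |εhi|) * (|δlo| + |δhi|))) := by
    intro p
    exact abs_mul_le15 (abs_mul_le15 (hFb _) (hGb _))
      (abs_mul_le15 (abs_le_of_Icc15 (jointDens_bdd15 S u _))
        (abs_mul_le15 (abs_le_of_Icc15 (S.hqb _ _)) (abs_le_of_Icc15 (S.hgb _ _))))
  have hΨint : Integrable Ψ (ν.prod J) := integrable_of_bdd15 hΨm hΨb
  have hsymm : ∀ p : X × (Fin (u + 1) → X),
      F (fun i => (e.symm p) i.castSucc) * G ((e.symm p) (Fin.last (u + 1))) *
        jointDens (u + 1) q g (e.symm p) = Ψ p := by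
    intro p
    have hes : (e.symm p : Fin (u + 2) → X) = Fin.snoc p.2 p.1 := by
      rw [hedef, MeasurableEquiv.piFinSuccAbove_symm_apply]
      show (Fin.insertNthEquiv (fun _ => X) (Fin.last (u + 1))) p = Fin.snoc p.2 p.1
      simp only [Fin.insertNthEquiv, Equiv.coe_fn_mk]
      exact Fin.insertNth_last' p.1 p.2
    rw [hes]
    have hc : (fun i : Fin (u + 1) => (Fin.snoc p.2 p.1 : Fin (u + 2) → X) i.castSucc) = p.2 := by
      funext i; simp
    rw [hc, Fin.snoc_last, jointDens_snoc15, hΨdef]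
  calc (∫ x, F (fun i => x i.castSucc) * G (x (Fin.last (u + 1))) *
        jointDens (u + 1) q g x ∂(baseMeas (u + 1) χ ν))
      = ∫ x, Ψ (e x) ∂(baseMeas (u + 1) χ ν) := by
        refine integral_congr_ae (Filter.Eventually.of_forall fun x => ?_)
        dsimp only
        rw [← hsymm (e x), e.symm_apply_apply]
    _ = ∫ p, Ψ p ∂(ν.prod J) := by
        rw [← hmp.map_eq, integral_map_equiv]
    _ = ∫ y, ∫ x, Ψ (y, x) ∂J ∂ν := integral_prod Ψ hΨint
    _ = ∫ x, ∫ y, Ψ (y, x) ∂ν ∂J := by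
        refine integral_integral_swap ?_
        exact hΨint
    _ = ∫ x, F x * (∫ y, G y * (g (u + 1) y * q (x (Fin.last u)) y) ∂ν) *
          jointDens u q g x ∂J := by
        refine integral_congr_ae (Filter.Eventually.of_forall fun x => ?_)
        dsimp only
        have e1 : (fun y => Ψ (y, x)) = fun y =>
            (G y * (g (u + 1) y * q (x (Fin.last u)) y)) * (F x * jointDens u q g x) := by
          funext y
          rw [hΨdef]
          ring
        rw [e1, integral_mul_const]
        ring

/-- Collapsing the path integral of a function of the last coordinate. -/
lemma collapse15 [IsProbabilityMeasure χ] [IsFiniteMeasure ν]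
    (S : Hyp15 χ ν q g εlo εhi δlo δhi) (u : ℕ) :
    ∀ (H : X → ℝ), Measurable H → ∀ BH : ℝ, (∀ x, |H x| ≤ BH) →
      (∫ x, H (x (Fin.last u)) * jointDens u q g x ∂(baseMeas u χ ν)) =
        Gam15 χ ν q g u H := by
  induction u with
  | zero =>
    intro H hH BH hBH
    have hbase : baseMeas 0 χ ν = Measure.pi (fun _ : Fin 1 => χ) := by
      unfold baseMeas
      congr 1
      funext i
      rw [if_pos (Fin.eq_zero i)]
    have hmp := measurePreserving_funUnique χ (Fin 1)
    calc ∫ x, H (x (Fin.last 0)) * jointDens 0 q g x ∂(baseMeas 0 χ ν)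
        = ∫ x, (fun z => H z * g 0 z) ((MeasurableEquiv.funUnique (Fin 1) X) x)
            ∂(Measure.pi (fun _ : Fin 1 => χ)) := by
          rw [hbase]
          refine integral_congr_ae (Filter.Eventually.of_forall fun x => ?_)
          dsimp only
          have h1 : Fin.last 0 = 0 := rfl
          have h2 : (MeasurableEquiv.funUnique (Fin 1) X) x = x 0 := rfl
          rw [h1, h2]
          simp [jointDens]
      _ = ∫ z, H z * g 0 z ∂χ := by
          have h3 := integral_map_equiv (MeasurableEquiv.funUnique (Fin 1) X)
            (fun z => H z * g 0 z) (μ := Measure.pi (fun _ : Fin 1 => χ))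
          exact hmp.integral_comp' (fun z => H z * g 0 z)
      _ = Gam15 χ ν q g 0 H := by
          simp [Gam15, bm15_zero, wden15]
  | succ u ih =>
    intro H hH BH hBH
    calc ∫ x, H (x (Fin.last (u + 1))) * jointDens (u + 1) q g x ∂(baseMeas (u + 1) χ ν)
        = ∫ x, (fun _ : Fin (u + 1) → X => (1 : ℝ)) (fun i => x i.castSucc) *
            H (x (Fin.last (u + 1))) * jointDens (u + 1) q g x ∂(baseMeas (u + 1) χ ν) := by
          refine integral_congr_ae (Filter.Eventually.of_forall fun x => ?_)
          dsimp only
          rw [one_mul]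
      _ = ∫ x, (fun _ : Fin (u + 1) → X => (1 : ℝ)) x *
            (∫ y, H y * (g (u + 1) y * q (x (Fin.last u)) y) ∂ν) *
            jointDens u q g x ∂(baseMeas u χ ν) :=
          snoc_step15 S u measurable_const (BF := 1) (fun _ => by simp) hH hBH
      _ = ∫ x, (fun z => ∫ y, H y * (g (u + 1) y * q z y) ∂ν) (x (Fin.last u)) *
            jointDens u q g x ∂(baseMeas u χ ν) := by
          refine integral_congr_ae (Filter.Eventually.of_forall fun x => ?_)
          dsimp only
          rw [one_mul]
      _ = Gam15 χ ν q g u (fun z => ∫ y, H y * (g (u + 1) y * q z y) ∂ν) :=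
          ih _ (pred15_meas S u hH) _ (pred15_bdd S u hH hBH)
      _ = Gam15 χ ν q g (u + 1) H := (Gam15_succ S u hH hBH).symm

/-- The main induction: the smoothing integral against `h(x_s) f(x_{s+k})` equals the
unnormalised filter applied to `T_{s|s+k} · f`. -/
lemma star15 [IsProbabilityMeasure χ] [IsFiniteMeasure ν]
    (S : Hyp15 χ ν q g εlo εhi δlo δhi) (s : ℕ) {h : X → ℝ} {C : ℝ}
    (hh : Measurable h) (hhb : ∀ x, |h x| ≤ C) (k : ℕ) :
    ∀ (f : X → ℝ), Measurable f → ∀ B : ℝ, (∀ x, |f x| ≤ B) →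
      (∫ x, h (x (Fin.ofNat (s + k + 1) s)) * f (x (Fin.last (s + k))) *
          jointDens (s + k) q g x ∂(baseMeas (s + k) χ ν)) =
        Gam15 χ ν q g (s + k) (fun y => TstF q (filt0 χ ν q g) s h k y * f y) := by
  induction k with
  | zero =>
    intro f hf B hB
    have hcoord : (Fin.ofNat (s + 0 + 1) s) = Fin.last (s + 0) := by
      apply Fin.ext
      simp [Fin.val_ofNat, Nat.mod_eq_of_lt]
    rw [hcoord]
    exact collapse15 S (s + 0) (fun z => h z * f z) (hh.mul hf) (C * B)
      (fun z => abs_mul_le15 (hhb z) (hB z))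
  | succ k ih =>
    intro f hf B hB
    have hcoord : (Fin.ofNat (s + (k + 1) + 1) s) =
        Fin.castSucc (Fin.ofNat (s + k + 1) s) := by
      apply Fin.ext
      rw [Fin.coe_castSucc, Fin.val_ofNat, Fin.val_ofNat,
        Nat.mod_eq_of_lt (by omega), Nat.mod_eq_of_lt (by omega)]
    calc (∫ x, h (x (Fin.ofNat (s + (k + 1) + 1) s)) * f (x (Fin.last (s + (k + 1)))) *
          jointDens (s + (k + 1)) q g x ∂(baseMeas (s + (k + 1)) χ ν))
        = ∫ x, (fun x' : Fin (s + k + 1) → X => h (x' (Fin.ofNat (s + k + 1) s)))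
            (fun i => x i.castSucc) * f (x (Fin.last (s + k + 1))) *
            jointDens (s + k + 1) q g x ∂(baseMeas (s + k + 1) χ ν) := by
          refine integral_congr_ae (Filter.Eventually.of_forall fun x => ?_)
          dsimp only
          rw [hcoord]
          rfl
      _ = ∫ x, (fun x' : Fin (s + k + 1) → X => h (x' (Fin.ofNat (s + k + 1) s))) x *
            (∫ y, f y * (g (s + k + 1) y * q (x (Fin.last (s + k))) y) ∂ν) *
            jointDens (s + k) q g x ∂(baseMeas (s + k) χ ν) :=
          snoc_step15 S (s + k) (hh.comp (measurable_pi_apply _)) (BF := C)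
            (fun x' => hhb _) hf hB
      _ = Gam15 χ ν q g (s + k) (fun y => TstF q (filt0 χ ν q g) s h k y *
            ∫ y', f y' * (g (s + k + 1) y' * q y y') ∂ν) :=
          ih (fun z => ∫ y, f y * (g (s + k + 1) y * q z y) ∂ν)
            (pred15_meas S (s + k) hf) _ (pred15_bdd S (s + k) hf hB)
      _ = Gam15 χ ν q g (s + (k + 1))
            (fun y => TstF q (filt0 χ ν q g) s h (k + 1) y * f y) :=
          (Gam15_T_step S s k hh hhb hf hB).symm

/-- the marginal smoothing expectation equals the filter expectation of the
backward statistic: `φ_{0:t|t}(f) = φ_t(T_{s|t})` for `f(x_0, …, x_t) = h(x_s)`. -/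
theorem stmt15 (t : ℕ)
    (χ : Measure X) [IsProbabilityMeasure χ]
    (ν : Measure X) [IsFiniteMeasure ν] (hν : ν ≠ 0)
    (q : X → X → ℝ) (hq : Measurable (Function.uncurry q))
    (εlo εhi : ℝ) (hεlo : 0 < εlo) (hεhi : εlo ≤ εhi)
    (hqb : ∀ x x', q x x' ∈ Set.Icc εlo εhi)
    (g : ℕ → X → ℝ) (hg : ∀ u, Measurable (g u))
    (δlo δhi : ℝ) (hδlo : 0 < δlo) (hδ : δlo ≤ δhi)
    (hgb : ∀ u x, g u x ∈ Set.Icc δlo δhi)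
    (s : ℕ) (hst : s ≤ t)
    (h : X → ℝ) (hh : Measurable h) (C : ℝ) (hhb : ∀ x, |h x| ≤ C) :
    (∫ x, h (x (Fin.ofNat (t + 1) s)) * jointDens t q g x ∂(baseMeas t χ ν)) /
        (∫ x, jointDens t q g x ∂(baseMeas t χ ν)) =
      filt0 χ ν q g t (TstF q (filt0 χ ν q g) s h (t - s)) := by
  have S : Hyp15 χ ν q g εlo εhi δlo δhi := ⟨hν, hq, hεlo, hεhi, hqb, hg, hδlo, hδ, hgb⟩
  obtain ⟨k, rfl⟩ : ∃ k, t = s + k := ⟨t - s, by omega⟩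
  have hts : s + k - s = k := by omega
  rw [hts]
  have hhb' : ∀ x, |h x| ≤ C := hhb
  have hone : ∀ x : X, |(fun _ : X => (1 : ℝ)) x| ≤ 1 := fun _ => by simp
  obtain ⟨hTm, D, hD0, hTb⟩ := TstF15_prop S s hh hhb k
  have e1 : (∫ x, h (x (Fin.ofNat (s + k + 1) s)) * jointDens (s + k) q g x
      ∂(baseMeas (s + k) χ ν)) =
      Gam15 χ ν q g (s + k) (TstF q (filt0 χ ν q g) s h k) := by
    calc (∫ x, h (x (Fin.ofNat (s + k + 1) s)) * jointDens (s + k) q g x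
        ∂(baseMeas (s + k) χ ν))
        = ∫ x, h (x (Fin.ofNat (s + k + 1) s)) *
            (fun _ : X => (1 : ℝ)) (x (Fin.last (s + k))) *
            jointDens (s + k) q g x ∂(baseMeas (s + k) χ ν) := by
          refine integral_congr_ae (Filter.Eventually.of_forall fun x => ?_)
          dsimp only
          rw [mul_one]
      _ = Gam15 χ ν q g (s + k)
            (fun y => TstF q (filt0 χ ν q g) s h k y * (fun _ : X => (1 : ℝ)) y) :=
          star15 S s hh hhb k (fun _ => (1 : ℝ)) measurable_const 1 hone
      _ = Gam15 χ ν q g (s + k) (TstF q (filt0 χ ν q g) s h k) := by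
          refine congrArg _ (funext fun y => ?_)
          dsimp only
          rw [mul_one]
  have e2 : (∫ x, jointDens (s + k) q g x ∂(baseMeas (s + k) χ ν)) =
      Gam15 χ ν q g (s + k) (fun _ => 1) := by
    calc (∫ x, jointDens (s + k) q g x ∂(baseMeas (s + k) χ ν))
        = ∫ x, (fun _ : X => (1 : ℝ)) (x (Fin.last (s + k))) * jointDens (s + k) q g x
            ∂(baseMeas (s + k) χ ν) := by
          refine integral_congr_ae (Filter.Eventually.of_forall fun x => ?_)
          dsimp only
          rw [one_mul]
      _ = Gam15 χ ν q g (s + k) (fun _ => 1) :=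
          collapse15 S (s + k) (fun _ => (1 : ℝ)) measurable_const 1 hone
  rw [e1, e2, filt0_eq15 S (s + k) _ hTm D hTb]

end
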